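/- The function f_n on 2n variables defined by f_n(x,y) = AND over i of (x_i XOR y_i) has exactly 2^n models, and every model of f_n is isolated: flipping any single bit of a model yields a non-model. Consequently, any BNN representation of f_n has at least 2^n positive prototypes. -/

import Mathlib

/-!
Every model `z` of `f_n` has `z (inr i) = !z (inl i)`, so models correspond to their first
halves, and flipping one bit breaks exactly one of the constraints `z (inl i) ≠ z (inr i)`.
An isolated model `z` must be a positive prototype: otherwise take its nearest prototype
`b ∈ P` and move `z` one step towards `b`; the resulting non-model `w` is one step closer to
`b` than `z`, so the negative prototype that beats `b` at `w` also beats `b` at `z`.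
-/

/-- (P,N) is a Boolean Nearest Neighbor representation of f (vectors indexed
by an arbitrary finite index type). -/
def IsBNN {ι : Type*} [Fintype ι] [DecidableEq ι] (f : (ι → Bool) → Bool)
    (P N : Finset (ι → Bool)) : Prop :=
  Disjoint P N ∧
  (∀ a, f a = true → ∃ b ∈ P, ∀ c ∈ N, hammingDist a b < hammingDist a c) ∧
  (∀ a, f a = false → ∃ b ∈ N, ∀ c ∈ P, hammingDist a b < hammingDist a c)

section Hamming

variable {ι : Type*} [Fintype ι] {β : ι → Type*} [∀ i, DecidableEq (β i)]

theorem exists_ne_forall_eq_of_hammingDist_eq_one {x y : ∀ i, β i}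
    (h : hammingDist x y = 1) : ∃ j, x j ≠ y j ∧ ∀ i, i ≠ j → x i = y i := by
  obtain ⟨j, hj⟩ := Finset.card_eq_one.mp h
  have hmem : ∀ i, x i ≠ y i ↔ i = j := fun i => by
    simpa using congrArg (i ∈ ·) hj
  exact ⟨j, (hmem j).mpr rfl, fun i hi => not_not.mp fun hne => hi ((hmem i).mp hne)⟩

theorem hammingDist_update_eq_one [DecidableEq ι] {x : ∀ i, β i} {j : ι} {a : β j}
    (h : x j ≠ a) :
    hammingDist x (Function.update x j a) = 1 := by
  rw [hammingDist, Finset.card_eq_one]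
  refine ⟨j, Finset.ext fun i => ?_⟩
  by_cases hi : i = j
  · subst hi; simp [h]
  · simp [hi]

theorem hammingDist_update_add_one [DecidableEq ι] {x y : ∀ i, β i} {j : ι} (h : x j ≠ y j) :
    hammingDist (Function.update x j (y j)) y + 1 = hammingDist x y := by
  have hfilter : Finset.univ.filter (fun i => Function.update x j (y j) i ≠ y i)
      = (Finset.univ.filter fun i => x i ≠ y i).erase j := by
    ext i
    by_cases hi : i = j
    · subst hi; simp
    · simp [hi]
  rw [hammingDist, hammingDist, hfilter, Finset.card_erase_add_one (by simpa using h)]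

end Hamming

section BNN

variable {ι : Type*} [Fintype ι] [DecidableEq ι]

def IsIsolatedModel (f : (ι → Bool) → Bool) (z : ι → Bool) : Prop :=
  f z = true ∧ ∀ w, hammingDist z w = 1 → f w = false

theorem IsBNN.mem_left_of_isIsolatedModel {f : (ι → Bool) → Bool} {P N : Finset (ι → Bool)}
    (hPN : IsBNN f P N) {z : ι → Bool} (hz : IsIsolatedModel f z) : z ∈ P := by
  obtain ⟨-, hpos, hneg⟩ := hPN
  by_contra hzP
  obtain ⟨b, hbP, hb⟩ := hpos z hz.1
  obtain ⟨j, hj⟩ : ∃ j, z j ≠ b j := Function.ne_iff.mp fun h => hzP (h ▸ hbP)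
  set w := Function.update z j (b j)
  have hzw : hammingDist z w = 1 := hammingDist_update_eq_one hj
  have hwb : hammingDist w b + 1 = hammingDist z b := hammingDist_update_add_one hj
  obtain ⟨c, hcN, hc⟩ := hneg w (hz.2 w hzw)
  refine lt_irrefl (hammingDist z c) ?_
  calc hammingDist z c ≤ hammingDist z w + hammingDist w c := hammingDist_triangle z w c
    _ < 1 + hammingDist w b := by rw [hzw]; exact Nat.add_lt_add_left (hc b hbP) 1
    _ = hammingDist z b := by rw [← hwb, add_comm]
    _ < hammingDist z c := hb c hcN

theorem IsBNN.card_le_card_left {f : (ι → Bool) → Bool} {P N : Finset (ι → Bool)}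
    (hPN : IsBNN f P N) {M : Finset (ι → Bool)} (hM : ∀ z ∈ M, IsIsolatedModel f z) :
    M.card ≤ P.card :=
  Finset.card_le_card fun z hz => hPN.mem_left_of_isIsolatedModel (hM z hz)

end BNN

section XorModel

variable {α : Type*}

abbrev IsXorModel (z : α ⊕ α → Bool) : Prop :=
  ∀ i, z (Sum.inl i) ≠ z (Sum.inr i)

theorem IsXorModel.eq_not {z : α ⊕ α → Bool} (hz : IsXorModel z) (i : α) :
    z (Sum.inr i) = !z (Sum.inl i) :=
  Bool.eq_not_iff.mpr (hz i).symm

def xorModelEquiv : {z : α ⊕ α → Bool // IsXorModel z} ≃ (α → Bool) where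
  toFun z i := z.1 (Sum.inl i)
  invFun x := ⟨Sum.elim x fun i => !x i, fun i => by simp⟩
  left_inv z := by
    ext (i | i)
    · rfl
    · exact (z.2.eq_not i).symm
  right_inv _ := rfl

theorem card_filter_isXorModel [Fintype α] [DecidableEq α] :
    (Finset.univ.filter fun z : α ⊕ α → Bool => IsXorModel z).card = 2 ^ Fintype.card α := by
  rw [← Fintype.card_subtype, Fintype.card_congr xorModelEquiv, Fintype.card_fun,
    Fintype.card_bool]

theorem IsXorModel.not_isXorModel_of_hammingDist_eq_one [Fintype α] [DecidableEq α]
    {z w : α ⊕ α → Bool} (hz : IsXorModel z) (hzw : hammingDist z w = 1) :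
    ¬ IsXorModel w := by
  intro hw
  obtain ⟨j, hj, hrest⟩ := exists_ne_forall_eq_of_hammingDist_eq_one hzw
  rcases j with k | k
  · have := hrest (Sum.inr k) Sum.inr_ne_inl
    rw [hz.eq_not, hw.eq_not] at this
    exact hj (by simpa using this)
  · have := hrest (Sum.inl k) Sum.inl_ne_inr
    exact hj (by rw [hz.eq_not, hw.eq_not, this])

theorem IsXorModel.isIsolatedModel [Fintype α] [DecidableEq α] {f : (α ⊕ α → Bool) → Bool}
    (hf : ∀ z, f z = true ↔ IsXorModel z) {z : α ⊕ α → Bool} (hz : IsXorModel z) :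
    IsIsolatedModel f z :=
  ⟨(hf z).mpr hz, fun _ hzw => Bool.eq_false_iff.mpr fun hw =>
    hz.not_isXorModel_of_hammingDist_eq_one hzw ((hf _).mp hw)⟩

end XorModel

/-- the function f_n(x,y) = ⋀_i (x_i XOR y_i) on 2n variables
(indexed by Fin n ⊕ Fin n) has exactly 2^n models, all of which are isolated,
and hence any BNN representation of f_n has at least 2^n positive prototypes. -/
theorem xor_conjunction_needs_exponential_bnn (n : ℕ) :
    (Finset.univ.filter
      (fun z : Fin n ⊕ Fin n → Bool =>
        (∀ i : Fin n, z (Sum.inl i) ≠ z (Sum.inr i)))).card = 2 ^ n ∧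
    (∀ z : Fin n ⊕ Fin n → Bool,
      (∀ i : Fin n, z (Sum.inl i) ≠ z (Sum.inr i)) →
      ∀ w : Fin n ⊕ Fin n → Bool, hammingDist z w = 1 →
        ¬ (∀ i : Fin n, w (Sum.inl i) ≠ w (Sum.inr i))) ∧
    (∀ P N : Finset (Fin n ⊕ Fin n → Bool),
      IsBNN (fun z => decide (∀ i : Fin n, z (Sum.inl i) ≠ z (Sum.inr i))) P N →
      2 ^ n ≤ P.card) := by
  have hcard : (Finset.univ.filter fun z : Fin n ⊕ Fin n → Bool =>
      ∀ i : Fin n, z (Sum.inl i) ≠ z (Sum.inr i)).card = 2 ^ n := by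
    convert card_filter_isXorModel (α := Fin n)
    exact (Fintype.card_fin n).symm
  refine ⟨hcard, fun _ hz _ => IsXorModel.not_isXorModel_of_hammingDist_eq_one hz,
    fun P N hPN => hcard ▸ hPN.card_le_card_left fun z hz => ?_⟩
  exact IsXorModel.isIsolatedModel (fun _ => decide_eq_true_iff) (Finset.mem_filter.mp hz).2
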